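/- arXiv:2505.08094 — 6 statements merged into one kernel-verified Lean document; each statement's English description precedes it below -/
import Mathlib

section
/- Let p be a positive integer and let a, b : {1,...,p} → ℕ be multiplicity vectors of two partitions of the same number m, i.e. Σ_{i=1}^{p} i·a_i = Σ_{i=1}^{p} i·b_i = m. Then the following are equivalent: (i) for every ℓ ≥ 1, Σ_{j=1}^{p} min(ℓ, Σ_{i=j}^{p} a_i) ≤ Σ_{j=1}^{p} min(ℓ, Σ_{i=j}^{p} b_i) (i.e. for each ℓ the number of boxes in the top ℓ rows of the Young diagram of a is at most that of b, the dominance order); (ii) for every s with 1 ≤ s < p, Σ_{i=s+1}^{p} a_i·(i − s) ≤ Σ_{i=s+1}^{p} b_i·(i − s). -/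
open Finset

private lemma icc_eq_ioc (s p : ℕ) : Finset.Icc (s + 1) p = Finset.Ioc s p := by
  ext x; simp only [mem_Icc, mem_Ioc]; omega

private lemma tail_swap (p s : ℕ) (x : ℕ → ℕ) :
    ∑ i ∈ Finset.Icc (s + 1) p, x i * (i - s)
      = ∑ j ∈ Finset.Ioc s p, ∑ i ∈ Finset.Icc j p, x i := by
  rw [icc_eq_ioc]
  rw [Finset.sum_comm' (s' := fun i => Finset.Ioc s i) (t' := Finset.Ioc s p)
      (f := fun _ i => x i)
      (fun j i => by simp only [mem_Ioc, mem_Icc]; omega)]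
  refine Finset.sum_congr rfl fun i _ => ?_
  rw [Finset.sum_const, smul_eq_mul, Nat.card_Ioc, Nat.mul_comm]

/-- For multiplicity vectors `a b : {1,...,p} → ℕ` of partitions of the same number `m`,
the dominance order (comparison of the number of boxes in the top `ℓ` rows of the
associated Young diagrams, for every `ℓ`) is equivalent to the comparison of the
quantities `Σ_{i=s+1}^{p} a i * (i - s)` (the rank of `X^s` on the associated
`K[X]/(X^p)`-module) for all `1 ≤ s < p`. -/
theorem dominance_iff_ranks (p m : ℕ) (hp : 0 < p) (a b : ℕ → ℕ)
    (ha : ∑ i ∈ Finset.Icc 1 p, i * a i = m)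
    (hb : ∑ i ∈ Finset.Icc 1 p, i * b i = m) :
    (∀ ℓ : ℕ, 1 ≤ ℓ →
        ∑ j ∈ Finset.Icc 1 p, min ℓ (∑ i ∈ Finset.Icc j p, a i)
          ≤ ∑ j ∈ Finset.Icc 1 p, min ℓ (∑ i ∈ Finset.Icc j p, b i))
      ↔ (∀ s : ℕ, 1 ≤ s → s < p →
        ∑ i ∈ Finset.Icc (s + 1) p, a i * (i - s)
          ≤ ∑ i ∈ Finset.Icc (s + 1) p, b i * (i - s)) := by
  have h10 : Finset.Icc 1 p = Finset.Ioc 0 p := icc_eq_ioc 0 p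
  -- antitonicity of tail sums
  have hanti : ∀ (x : ℕ → ℕ) (j j' : ℕ), j ≤ j' →
      ∑ i ∈ Finset.Icc j' p, x i ≤ ∑ i ∈ Finset.Icc j p, x i := fun x _ _ h =>
    Finset.sum_le_sum_of_subset (Finset.Icc_subset_Icc h le_rfl)
  -- total sums
  have hsum : ∀ (x : ℕ → ℕ), (∑ i ∈ Finset.Icc 1 p, i * x i = m) →
      ∑ j ∈ Finset.Ioc 0 p, ∑ i ∈ Finset.Icc j p, x i = m := by
    intro x hx
    rw [← tail_swap p 0 x, ← hx]
    refine Finset.sum_congr (by norm_num) fun i _ => ?_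
    rw [Nat.sub_zero, Nat.mul_comm]
  constructor
  · -- dominance → ranks
    intro h s hs1 hsp
    rw [tail_swap, tail_swap]
    by_cases h0 : ∑ i ∈ Finset.Icc s p, a i = 0
    · have hz : ∑ j ∈ Finset.Ioc s p, ∑ i ∈ Finset.Icc j p, a i = 0 := by
        refine Finset.sum_eq_zero fun j hj => ?_
        have := hanti a _ _ (le_of_lt (mem_Ioc.mp hj).1)
        omega
      rw [hz]; exact Nat.zero_le _
    · set ℓ : ℕ := ∑ i ∈ Finset.Icc s p, a i with hℓdef
      have hℓ1 : 1 ≤ ℓ := Nat.one_le_iff_ne_zero.mpr h0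
      have key := h ℓ hℓ1
      rw [h10, ← Finset.sum_Ioc_consecutive (fun j => min ℓ (∑ i ∈ Finset.Icc j p, a i))
            (Nat.zero_le s) (le_of_lt hsp),
          ← Finset.sum_Ioc_consecutive (fun j => min ℓ (∑ i ∈ Finset.Icc j p, b i))
            (Nat.zero_le s) (le_of_lt hsp)] at key
      -- on the a-side we have equality pieces
      have hA1 : ∑ j ∈ Finset.Ioc 0 s, min ℓ (∑ i ∈ Finset.Icc j p, a i)
          = s * ℓ := by
        rw [Finset.sum_congr rfl (fun j hj => ?_), Finset.sum_const, Nat.card_Ioc,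
          smul_eq_mul, Nat.sub_zero]
        have := hanti a _ _ (mem_Ioc.mp hj).2
        exact min_eq_left this
      have hA2 : ∑ j ∈ Finset.Ioc s p, min ℓ (∑ i ∈ Finset.Icc j p, a i)
          = ∑ j ∈ Finset.Ioc s p, ∑ i ∈ Finset.Icc j p, a i := by
        refine Finset.sum_congr rfl fun j hj => ?_
        have := hanti a _ _ (le_of_lt (mem_Ioc.mp hj).1)
        exact min_eq_right this
      have hB1 : ∑ j ∈ Finset.Ioc 0 s, min ℓ (∑ i ∈ Finset.Icc j p, b i)
          ≤ s * ℓ := by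
        calc ∑ j ∈ Finset.Ioc 0 s, min ℓ (∑ i ∈ Finset.Icc j p, b i)
            ≤ ∑ _j ∈ Finset.Ioc 0 s, ℓ := Finset.sum_le_sum fun j _ => min_le_left _ _
          _ = s * ℓ := by rw [Finset.sum_const, Nat.card_Ioc, smul_eq_mul, Nat.sub_zero]
      have hB2 : ∑ j ∈ Finset.Ioc s p, min ℓ (∑ i ∈ Finset.Icc j p, b i)
          ≤ ∑ j ∈ Finset.Ioc s p, ∑ i ∈ Finset.Icc j p, b i :=
        Finset.sum_le_sum fun j _ => min_le_right _ _
      omega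
  · -- ranks → dominance
    intro h ℓ hℓ
    set S : Finset ℕ := (Finset.Ioc 0 p).filter
      (fun j => ℓ ≤ ∑ i ∈ Finset.Icc j p, b i) with hSdef
    set s : ℕ := S.sup id with hsdef
    have hsp : s ≤ p := Finset.sup_le fun j hj => by
      have := (mem_Ioc.mp (Finset.mem_filter.mp hj).1).2
      simpa using this
    -- tails comparison at s
    have htails : ∑ j ∈ Finset.Ioc s p, ∑ i ∈ Finset.Icc j p, a i
        ≤ ∑ j ∈ Finset.Ioc s p, ∑ i ∈ Finset.Icc j p, b i := by
      rcases Nat.eq_zero_or_pos s with h0 | h0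
      · rw [h0, hsum a ha, hsum b hb]
      · rcases eq_or_lt_of_le hsp with hep | hlt
        · rw [hep]; simp
        · rw [← tail_swap, ← tail_swap]; exact h s h0 hlt
    -- structure of b-side
    have hB1 : ∀ j ∈ Finset.Ioc 0 s, ℓ ≤ ∑ i ∈ Finset.Icc j p, b i := by
      intro j hj
      obtain ⟨hj1, hj2⟩ := mem_Ioc.mp hj
      have hne : S.Nonempty := by
        rw [Finset.nonempty_iff_ne_empty]
        intro hemp
        rw [hsdef, hemp] at hj2
        simp at hj2
        omega
      obtain ⟨t, htS, hts⟩ := Finset.exists_mem_eq_sup S hne id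
      have hlt : ℓ ≤ ∑ i ∈ Finset.Icc t p, b i := (Finset.mem_filter.mp htS).2
      have hjt : j ≤ t := by rw [hsdef, hts] at hj2; exact hj2
      exact le_trans hlt (hanti b _ _ hjt)
    have hB2 : ∀ j ∈ Finset.Ioc s p, min ℓ (∑ i ∈ Finset.Icc j p, b i)
        = ∑ i ∈ Finset.Icc j p, b i := by
      intro j hj
      obtain ⟨hj1, hj2⟩ := mem_Ioc.mp hj
      have hjS : j ∉ S := by
        intro hjS
        have : id j ≤ s := Finset.le_sup hjS
        simp at this; omega
      have hnb : ¬ ℓ ≤ ∑ i ∈ Finset.Icc j p, b i := fun hl =>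
        hjS (Finset.mem_filter.mpr ⟨mem_Ioc.mpr ⟨by omega, hj2⟩, hl⟩)
      exact min_eq_right (le_of_not_ge hnb)
    rw [h10,
      ← Finset.sum_Ioc_consecutive (fun j => min ℓ (∑ i ∈ Finset.Icc j p, a i))
        (Nat.zero_le s) hsp,
      ← Finset.sum_Ioc_consecutive (fun j => min ℓ (∑ i ∈ Finset.Icc j p, b i))
        (Nat.zero_le s) hsp]
    have e1 : ∑ j ∈ Finset.Ioc 0 s, min ℓ (∑ i ∈ Finset.Icc j p, a i)
        ≤ ∑ j ∈ Finset.Ioc 0 s, min ℓ (∑ i ∈ Finset.Icc j p, b i) := by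
      refine Finset.sum_le_sum fun j hj => ?_
      rw [min_eq_left (hB1 j hj)]
      exact min_le_left _ _
    have e2 : ∑ j ∈ Finset.Ioc s p, min ℓ (∑ i ∈ Finset.Icc j p, a i)
        ≤ ∑ j ∈ Finset.Ioc s p, min ℓ (∑ i ∈ Finset.Icc j p, b i) := by
      rw [Finset.sum_congr rfl hB2]
      exact le_trans (Finset.sum_le_sum fun j _ => min_le_right _ _) htails
    omega
end

section
/- Let R be a Noetherian local domain with maximal ideal 𝔪, residue field K = R/𝔪, and field of fractions L. Let f : M → N be an R-linear map between finite free R-modules. Then dim_L coker(L ⊗_R f) ≤ dim_K coker(K ⊗_R f). -/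
open TensorProduct

/-- Cokernel of a base-changed map is the base change of the cokernel. -/
noncomputable def cokerBaseChangeEquiv {R M N : Type*} [CommRing R] [AddCommGroup M] [Module R M]
    [AddCommGroup N] [Module R N] (f : M →ₗ[R] N) (A : Type*) [CommRing A] [Algebra R A] :
    ((A ⊗[R] N) ⧸ LinearMap.range (f.baseChange A)) ≃ₗ[A]
      A ⊗[R] (N ⧸ LinearMap.range f) := by
  let g := (LinearMap.range f).mkQ.baseChange A
  have hexact : Function.Exact (f.baseChange A) g :=
    lTensor_exact A (LinearMap.exact_map_mkQ_range f) (Submodule.mkQ_surjective _)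
  have hsurj : Function.Surjective g :=
    LinearMap.lTensor_surjective A (Submodule.mkQ_surjective _)
  have hker : LinearMap.range (f.baseChange A) = LinearMap.ker g := by
    ext x; exact (hexact x).symm
  exact (Submodule.quotEquivOfEq _ _ hker) ≪≫ₗ g.quotKerEquivOfSurjective hsurj

/-- Let `R` be a Noetherian local domain with residue field `K` and field of fractions `L`,
and let `f : M → N` be an `R`-linear map between finite free `R`-modules.  Then the
`L`-dimension of the cokernel of `L ⊗_R f` is at most the `K`-dimension of the cokernel
of `K ⊗_R f`. -/
theorem coker_rank_le (R : Type*) [CommRing R] [IsNoetherianRing R] [IsLocalRing R]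
    [IsDomain R]
    (M N : Type*) [AddCommGroup M] [Module R M] [AddCommGroup N] [Module R N]
    [Module.Free R M] [Module.Finite R M] [Module.Free R N] [Module.Finite R N]
    (f : M →ₗ[R] N) :
    Module.finrank (FractionRing R)
        ((FractionRing R ⊗[R] N) ⧸ LinearMap.range (f.baseChange (FractionRing R)))
      ≤ Module.finrank (IsLocalRing.ResidueField R)
        ((IsLocalRing.ResidueField R ⊗[R] N) ⧸
          LinearMap.range (f.baseChange (IsLocalRing.ResidueField R))) := by
  classical
  set K := IsLocalRing.ResidueField R
  set L := FractionRing R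
  rw [(cokerBaseChangeEquiv f L).finrank_eq, (cokerBaseChangeEquiv f K).finrank_eq]
  set C := N ⧸ LinearMap.range f with hC
  haveI : Module.Finite R C := Module.Finite.quotient R _
  haveI : Module.Finite K (K ⊗[R] C) := Module.Finite.base_change R K C
  let b := Module.finBasis K (K ⊗[R] C)
  have hmk : Function.Surjective (TensorProduct.mk R K C 1) :=
    TensorProduct.mk_surjective R C K (IsLocalRing.residue_surjective)
  choose c hc using fun i => hmk (b i)
  have hspan : Submodule.span R (Set.range c) = ⊤ :=
    IsLocalRing.span_eq_top_of_tmul_eq_basis (R := R) (f := c) b hc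
  have htop : Submodule.span L (Set.range fun i => (TensorProduct.mk R L C 1) (c i)) = ⊤ := by
    have := congrArg (Submodule.baseChange L) hspan
    rw [Submodule.baseChange_span, Submodule.baseChange_top, ← Set.range_comp] at this
    exact this
  have hle := finrank_le_of_span_eq_top htop
  simpa using hle
end

section
/- Let p be a positive integer and let R be a Noetherian local domain with residue field K and field of fractions L. Let M be a free R-module of finite rank equipped with an R-linear endomorphism θ satisfying θ^p = 0, and let θ_K and θ_L denote the induced endomorphisms of M_K = K ⊗_R M and M_L = L ⊗_R M. Then for every i with 1 ≤ i < p, the rank of (θ_K)^i is at most the rank of (θ_L)^i; consequently the Jordan type of the K[X]/(X^p)-module M_K is less than or equal to the Jordan type of the L[X]/(X^p)-module M_L in the dominance order. -/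
open Polynomial TensorProduct

/-- `K[X]/(X^i)`: the quotient of the polynomial ring `K[X]` by the ideal
generated by `X^i`, regarded as a `K`-module (indeed a `K`-algebra). -/
def PolyQuot (K : Type*) [Field K] (i : ℕ) : Type _ :=
  Polynomial K ⧸ Ideal.span {(Polynomial.X : Polynomial K) ^ i}

noncomputable instance (K : Type*) [Field K] (i : ℕ) : CommRing (PolyQuot K i) :=
  inferInstanceAs (CommRing (Polynomial K ⧸ Ideal.span {(Polynomial.X : Polynomial K) ^ i}))

noncomputable instance (K : Type*) [Field K] (i : ℕ) : Algebra K (PolyQuot K i) :=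
  inferInstanceAs (Algebra K (Polynomial K ⧸ Ideal.span {(Polynomial.X : Polynomial K) ^ i}))

/-- Multiplication by (the class of) `X` on `K[X]/(X^i)`, as a `K`-linear endomorphism. -/
noncomputable def PolyQuot.mulX (K : Type*) [Field K] (i : ℕ) : Module.End K (PolyQuot K i) :=
  LinearMap.mulLeft K
    ((Ideal.Quotient.mk (Ideal.span {(Polynomial.X : Polynomial K) ^ i}) Polynomial.X :
      PolyQuot K i))

/-- The standard `K[X]/(X^p)`-module `⊕_{i=1}^{p} (K[X]/(X^i))^{⊕ a i}`. -/
abbrev StdJordanModule (K : Type*) [Field K] (p : ℕ) (a : ℕ → ℕ) : Type _ :=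
  Π₀ i : Fin p, (Fin (a (i.1 + 1)) → PolyQuot K (i.1 + 1))

/-- The action of `X` on `⊕_{i=1}^{p} (K[X]/(X^i))^{⊕ a i}`. -/
noncomputable def stdX (K : Type*) [Field K] (p : ℕ) (a : ℕ → ℕ) :
    Module.End K (StdJordanModule K p a) :=
  DFinsupp.mapRange.linearMap fun i : Fin p =>
    (PolyQuot.mulX K (i.1 + 1)).compLeft (Fin (a (i.1 + 1)))

/-- A `K`-vector space `V` with endomorphism `θ` (with `θ^p = 0`, so that `V` is a
`K[X]/(X^p)`-module with `X` acting as `θ`) has Jordan type `(a_1, ..., a_p)` if it is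
isomorphic, as a `K[X]/(X^p)`-module, to `⊕_{i=1}^{p} (K[X]/(X^i))^{⊕ a i}`. -/
def HasJordanType (K : Type*) [Field K] (p : ℕ) {V : Type*} [AddCommGroup V] [Module K V]
    (θ : Module.End K V) (a : ℕ → ℕ) : Prop :=
  ∃ e : V ≃ₗ[K] StdJordanModule K p a, ∀ v : V, e (θ v) = stdX K p a (e v)

/-- The dominance order on Jordan types (multiplicity vectors of partitions): for every
`ℓ`, the number of boxes in the top `ℓ` rows of the Young diagram of `a` is at most the
corresponding number for `b`. -/
def JordanTypeLE (p : ℕ) (a b : ℕ → ℕ) : Prop :=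
  ∀ ℓ : ℕ, 1 ≤ ℓ →
    ∑ j ∈ Finset.Icc 1 p, min ℓ (∑ i ∈ Finset.Icc j p, a i)
      ≤ ∑ j ∈ Finset.Icc 1 p, min ℓ (∑ i ∈ Finset.Icc j p, b i)

/-!
Over a field the rank of a matrix is the size of its largest nonvanishing square minor. In a
basis of `M`, `(θ_K)^i` and `(θ_L)^i` are the images of one matrix over `R` under `R → K` and
under the injective `R → L`; a minor that survives in `K` is nonzero in `R`, hence in `L`.

On `⊕ⱼ (F[X]/(X^j))^{a_j}` the rank of `X^t` is `∑ⱼ a_j (j - t) = ∑_{j > t} A_j`, where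
`A_j = ∑_{i ≥ j} a_i` is the length of the `j`-th column of the Young diagram. The number of
boxes in its first `ℓ` rows, `∑ⱼ min ℓ A_j`, is the minimum over `t` of `ℓ t + ∑_{j > t} A_j`,
so the rank inequalities give the dominance.
-/

open Module

section Dominance

open Finset

theorem Nat.Icc_one_eq_Ioc_zero (p : ℕ) : Icc 1 p = Ioc 0 p := Icc_add_one_left_eq_Ioc 0 p

theorem Fin.sum_univ_eq_sum_Icc_one {M : Type*} [AddCommMonoid M] (f : ℕ → M) (p : ℕ) :
    ∑ i : Fin p, f (i + 1) = ∑ j ∈ Icc 1 p, f j := by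
  rw [Fin.sum_univ_eq_sum_range (fun i => f (i + 1)), range_eq_Ico, sum_Ico_add' f 0 p 1,
    zero_add, Ico_add_one_right_eq_Icc]

theorem sum_Icc_sum_Icc_eq_sum_mul_sub (a : ℕ → ℕ) (p t : ℕ) :
    ∑ j ∈ Icc (t + 1) p, ∑ k ∈ Icc j p, a k = ∑ k ∈ Icc 1 p, a k * (k - t) := by
  rw [sum_comm' (t' := Icc 1 p) (s' := fun k => Icc (t + 1) k)
    (by intro j k; simp only [mem_Icc]; omega)]
  refine sum_congr rfl fun k _ => ?_
  rw [sum_const, Nat.card_Icc, smul_eq_mul, mul_comm]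
  congr 1
  omega

theorem sum_min_le_mul_add_sum (A : ℕ → ℕ) (ℓ : ℕ) {p t : ℕ} (htp : t ≤ p) :
    ∑ j ∈ Icc 1 p, min ℓ (A j) ≤ ℓ * t + ∑ j ∈ Icc (t + 1) p, A j := by
  rw [Nat.Icc_one_eq_Ioc_zero, Icc_add_one_left_eq_Ioc,
    ← sum_Ioc_consecutive _ (Nat.zero_le t) htp]
  refine Nat.add_le_add ?_ (sum_le_sum fun j _ => min_le_right _ _)
  calc ∑ j ∈ Ioc 0 t, min ℓ (A j) ≤ ∑ _j ∈ Ioc 0 t, ℓ :=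
        sum_le_sum fun j _ => min_le_left _ _
    _ = ℓ * t := by rw [sum_const, Nat.card_Ioc, smul_eq_mul, mul_comm, Nat.sub_zero]

theorem exists_sum_min_eq_mul_add_sum {B : ℕ → ℕ} (hB : Antitone B) (ℓ p : ℕ) :
    ∃ t ≤ p, ∑ j ∈ Icc 1 p, min ℓ (B j) = ℓ * t + ∑ j ∈ Icc (t + 1) p, B j := by
  classical
  set t := Nat.findGreatest (fun j => ℓ ≤ B j) p
  have htp : t ≤ p := Nat.findGreatest_le p
  refine ⟨t, htp, ?_⟩
  have hhead : ∀ j ∈ Ioc 0 t, min ℓ (B j) = ℓ := fun j hj =>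
    have hj := mem_Ioc.mp hj
    min_eq_left
      ((Nat.findGreatest_of_ne_zero (P := fun j => ℓ ≤ B j) rfl (by omega)).trans (hB hj.2))
  have htail : ∀ j ∈ Ioc t p, min ℓ (B j) = B j := fun j hj =>
    min_eq_right (not_le.mp (Nat.findGreatest_is_greatest (P := fun j => ℓ ≤ B j)
      (mem_Ioc.mp hj).1 (mem_Ioc.mp hj).2)).le
  rw [Nat.Icc_one_eq_Ioc_zero, Icc_add_one_left_eq_Ioc,
    ← sum_Ioc_consecutive _ (Nat.zero_le t) htp, sum_congr rfl hhead, sum_congr rfl htail,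
    sum_const, Nat.card_Ioc, smul_eq_mul, mul_comm, Nat.sub_zero]

theorem jordanTypeLE_of_sum_mul_sub_le {p : ℕ} {a b : ℕ → ℕ}
    (h : ∀ t, ∑ j ∈ Icc 1 p, a j * (j - t) ≤ ∑ j ∈ Icc 1 p, b j * (j - t)) :
    JordanTypeLE p a b := by
  intro ℓ _
  have hB : Antitone fun j => ∑ i ∈ Icc j p, b i := fun j k hjk =>
    sum_le_sum_of_subset (Icc_subset_Icc_left hjk)
  obtain ⟨t, htp, hteq⟩ := exists_sum_min_eq_mul_add_sum hB ℓ p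
  calc ∑ j ∈ Icc 1 p, min ℓ (∑ i ∈ Icc j p, a i)
      ≤ ℓ * t + ∑ j ∈ Icc (t + 1) p, ∑ i ∈ Icc j p, a i :=
        sum_min_le_mul_add_sum _ ℓ htp
    _ ≤ ℓ * t + ∑ j ∈ Icc (t + 1) p, ∑ i ∈ Icc j p, b i := by
        rw [sum_Icc_sum_Icc_eq_sum_mul_sub, sum_Icc_sum_Icc_eq_sum_mul_sub]
        exact Nat.add_le_add_left (h t) _
    _ = ∑ j ∈ Icc 1 p, min ℓ (∑ i ∈ Icc j p, b i) := hteq.symm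

end Dominance

namespace Matrix

variable {m n F : Type*} [Fintype n] [Field F]

theorem exists_rank_submatrix_cols_eq (A : Matrix m n F) :
    ∃ g : Fin A.rank → n, (A.submatrix id g).rank = A.rank := by
  obtain ⟨κ, a, ha, hspan, hli⟩ := exists_linearIndependent' F A.col
  have : Finite κ := Finite.of_injective a ha
  have : Fintype κ := Fintype.ofFinite κ
  have hcard : Fintype.card κ = A.rank := by
    rw [rank_eq_finrank_span_cols, ← hspan, finrank_span_eq_card hli]
  let e : Fin A.rank ≃ κ := (Fintype.equivFinOfCardEq hcard).symm
  refine ⟨a ∘ e, ?_⟩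
  rw [rank_eq_finrank_span_cols]
  change finrank F (Submodule.span F (Set.range ((A.col ∘ a) ∘ e))) = _
  rw [e.surjective.range_comp, hspan, ← rank_eq_finrank_span_cols]

theorem det_ne_zero_of_rank_eq_card [DecidableEq n] {A : Matrix n n F}
    (h : A.rank = Fintype.card n) : A.det ≠ 0 := by
  have hrange : LinearMap.range A.mulVecLin = ⊤ :=
    Submodule.eq_top_of_finrank_eq (h.trans (finrank_fintype_fun_eq_card F).symm)
  have hunit : IsUnit A := mulVec_surjective_iff_isUnit.mp (LinearMap.range_eq_top.mp hrange)
  exact ((isUnit_iff_isUnit_det A).mp hunit).ne_zero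

theorem exists_det_submatrix_ne_zero [Fintype m] (A : Matrix m n F) :
    ∃ (f : Fin A.rank → m) (g : Fin A.rank → n), (A.submatrix f g).det ≠ 0 := by
  obtain ⟨g, hg⟩ := A.exists_rank_submatrix_cols_eq
  obtain ⟨f, hf⟩ := (A.submatrix id g)ᵀ.exists_rank_submatrix_cols_eq
  have hr : (A.submatrix id g)ᵀ.rank = A.rank := by rw [rank_transpose, hg]
  refine ⟨f ∘ Fin.cast hr.symm, g, det_ne_zero_of_rank_eq_card ?_⟩
  rw [Fintype.card_fin]
  calc (A.submatrix (f ∘ Fin.cast hr.symm) g).rank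
      = (((A.submatrix id g)ᵀ.submatrix id f)ᵀ.submatrix
          (finCongr hr.symm) (Equiv.refl _)).rank := rfl
    _ = A.rank := by rw [rank_submatrix, rank_transpose, hf, hr]

theorem rank_map_le_rank_map_of_injective [Fintype m] {R K L : Type*} [CommRing R] [Field K]
    [Field L] (A : Matrix m n R) (π : R →+* K) {σ : R →+* L} (hσ : Function.Injective σ) :
    (A.map π).rank ≤ (A.map σ).rank := by
  obtain ⟨f, g, hdet⟩ := (A.map π).exists_det_submatrix_ne_zero
  have hdetR : (A.submatrix f g).det ≠ 0 := by
    intro h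
    apply hdet
    rw [submatrix_map, ← RingHom.mapMatrix_apply, ← RingHom.map_det, h, map_zero]
  have hdetL : ((A.map σ).submatrix f g).det ≠ 0 := by
    rw [submatrix_map, ← RingHom.mapMatrix_apply, ← RingHom.map_det]
    exact (map_ne_zero_iff σ hσ).mpr hdetR
  calc (A.map π).rank = ((A.map σ).submatrix f g).rank := by
        rw [rank_of_det_ne_zero hdetL, Fintype.card_fin]
    _ ≤ (A.map σ).rank := rank_submatrix_le _ f g

end Matrix

open LinearMap Polynomial

namespace LinearMap

open Algebra.TensorProduct

variable {R M N : Type*} [CommRing R] [AddCommGroup M] [Module R M] [AddCommGroup N] [Module R N]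

theorem finrank_range_baseChange_eq_rank {ι κ : Type*} [Fintype ι] [DecidableEq ι] [Fintype κ]
    (A : Type*) [CommRing A] [Algebra R A] (f : M →ₗ[R] N) (bM : Basis ι R M)
    (bN : Basis κ R N) :
    finrank A (range (f.baseChange A)) = ((toMatrix bM bN f).map (algebraMap R A)).rank := by
  rw [← toMatrix_baseChange, Matrix.rank_eq_finrank_range_toLin _ (basis A bN) (basis A bM),
    Matrix.toLin_toMatrix]

theorem finrank_range_baseChange_le [Module.Free R M] [Module.Finite R M] [Module.Free R N]
    [Module.Finite R N] {K L : Type*} [Field K] [Field L] [Algebra R K] [Algebra R L]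
    (f : M →ₗ[R] N) (hL : Function.Injective (algebraMap R L)) :
    finrank K (range (f.baseChange K)) ≤ finrank L (range (f.baseChange L)) := by
  classical
  rw [finrank_range_baseChange_eq_rank K f (Free.chooseBasis R M) (Free.chooseBasis R N),
    finrank_range_baseChange_eq_rank L f (Free.chooseBasis R M) (Free.chooseBasis R N)]
  exact Matrix.rank_map_le_rank_map_of_injective _ _ hL

theorem piMap_pow {R ι : Type*} {V : ι → Type*} [Semiring R] [∀ i, AddCommMonoid (V i)]
    [∀ i, Module R (V i)] (f : ∀ i, Module.End R (V i)) (n : ℕ) :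
    piMap f ^ n = piMap fun i => f i ^ n := by
  induction n with
  | zero => ext; simp
  | succ n ih => ext; simp [pow_succ', ih]

theorem finrank_range_piMap {K ι : Type*} {V : ι → Type*} [DivisionRing K] [Fintype ι]
    [∀ i, AddCommGroup (V i)] [∀ i, Module K (V i)] [∀ i, FiniteDimensional K (V i)]
    (f : ∀ i, Module.End K (V i)) :
    finrank K (range (piMap f)) = ∑ i, finrank K (range (f i)) := by
  have hf : piMap f =
      piMap (fun i => (range (f i)).subtype) ∘ₗ piMap fun i => (f i).rangeRestrict := rfl
  have hsurj : range (piMap fun i => (f i).rangeRestrict) = ⊤ :=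
    range_eq_top.mpr (Function.Surjective.piMap fun i => (f i).surjective_rangeRestrict)
  rw [hf, range_comp_of_range_eq_top _ hsurj,
    finrank_range_of_inj (Function.Injective.piMap fun i => (range (f i)).injective_subtype),
    finrank_pi_fintype]

theorem compLeft_eq_piMap {R M N : Type*} [Semiring R] [AddCommMonoid M] [Module R M]
    [AddCommMonoid N] [Module R N] (g : M →ₗ[R] N) (α : Type*) :
    g.compLeft α = piMap fun _ => g := rfl

end LinearMap

theorem finrank_range_pow_eq_of_semiconj {K V W : Type*} [Ring K] [AddCommGroup V] [Module K V]
    [AddCommGroup W] [Module K W] (e : V ≃ₗ[K] W) {θ : Module.End K V} {φ : Module.End K W}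
    (h : ∀ v, e (θ v) = φ (e v)) (n : ℕ) :
    finrank K (range (θ ^ n)) = finrank K (range (φ ^ n)) := by
  have hn : (φ ^ n) ∘ₗ (e : V →ₗ[K] W) = (e : V →ₗ[K] W) ∘ₗ (θ ^ n) := by
    ext v
    simp only [coe_comp, LinearEquiv.coe_coe, Function.comp_apply, Module.End.coe_pow]
    exact (Function.Semiconj.iterate_right h n v).symm
  rw [← range_comp_of_range_eq_top (φ ^ n) e.range, hn, range_comp, e.finrank_map_eq]

namespace PolyQuot

variable (K : Type*) [Field K] (j : ℕ)

noncomputable def powerBasis : PowerBasis K (PolyQuot K j) :=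
  AdjoinRoot.powerBasis' (monic_X_pow j)

theorem powerBasis_dim : (powerBasis K j).dim = j := by
  simp [powerBasis, AdjoinRoot.powerBasis']

theorem mulX_eq_mulLeft_gen : mulX K j = mulLeft K (powerBasis K j).gen := rfl

theorem gen_pow_eq_zero {i : ℕ} (h : j ≤ i) : (powerBasis K j).gen ^ i = 0 := by
  obtain ⟨k, rfl⟩ := Nat.exists_eq_add_of_le h
  change AdjoinRoot.root (X ^ j : K[X]) ^ (j + k) = 0
  rw [pow_add, ← AdjoinRoot.mk_X, ← map_pow, AdjoinRoot.mk_self, zero_mul]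

instance : FiniteDimensional K (PolyQuot K j) :=
  (powerBasis K j).finite

theorem range_mulX_pow {i : ℕ} (hij : i ≤ j) :
    range (mulX K j ^ i) = Submodule.span K
      (Set.range fun k : Fin (j - i) => (powerBasis K j).gen ^ (i + (k : ℕ))) := by
  set pb := powerBasis K j
  rw [mulX_eq_mulLeft_gen, pow_mulLeft]
  apply le_antisymm
  · rw [range_eq_map, ← pb.basis.span_eq, Submodule.map_span, Submodule.span_le]
    rintro _ ⟨_, ⟨k, rfl⟩, rfl⟩
    rw [pb.basis_eq_pow, mulLeft_apply, ← pow_add]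
    rcases lt_or_ge (i + (k : ℕ)) j with hlt | hle
    · exact Submodule.subset_span ⟨⟨k, by omega⟩, rfl⟩
    · rw [gen_pow_eq_zero K j hle]
      exact Submodule.zero_mem _
  · rw [Submodule.span_le]
    rintro _ ⟨k, rfl⟩
    exact ⟨pb.gen ^ (k : ℕ), by rw [mulLeft_apply, ← pow_add]⟩

theorem finrank_range_mulX_pow (i : ℕ) : finrank K (range (mulX K j ^ i)) = j - i := by
  set pb := powerBasis K j
  rcases le_or_gt i j with hij | hji
  · have hemb : Function.Injective fun k : Fin (j - i) =>
        (⟨i + k, by rw [powerBasis_dim]; omega⟩ : Fin pb.dim) :=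
      fun k k' hk => Fin.ext (by simpa using hk)
    have hli : LinearIndependent K fun k : Fin (j - i) => pb.gen ^ (i + (k : ℕ)) := by
      simpa only [Function.comp_def, pb.basis_eq_pow] using pb.basis.linearIndependent.comp _ hemb
    rw [range_mulX_pow K j hij, finrank_span_eq_card hli, Fintype.card_fin]
  · rw [mulX_eq_mulLeft_gen, pow_mulLeft, gen_pow_eq_zero K j hji.le, mulLeft_zero_eq_zero,
      range_zero, finrank_bot, Nat.sub_eq_zero_of_le hji.le]

end PolyQuot

theorem finrank_range_stdX_pow (K : Type*) [Field K] (p : ℕ) (a : ℕ → ℕ) (n : ℕ) :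
    finrank K (range (stdX K p a ^ n)) = ∑ j ∈ Finset.Icc 1 p, a j * (j - n) := by
  have hsemi : ∀ v, DFinsupp.linearEquivFunOnFintype (R := K) (stdX K p a v) =
      piMap (R := K) (fun i : Fin p => (PolyQuot.mulX K (i + 1)).compLeft (Fin (a (i + 1))))
        (DFinsupp.linearEquivFunOnFintype (R := K) v) := fun v => rfl
  rw [finrank_range_pow_eq_of_semiconj _ hsemi, piMap_pow, finrank_range_piMap,
    ← Fin.sum_univ_eq_sum_Icc_one (fun j => a j * (j - n))]
  refine Finset.sum_congr rfl fun i _ => ?_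
  rw [compLeft_eq_piMap, piMap_pow, finrank_range_piMap, PolyQuot.finrank_range_mulX_pow,
    Finset.sum_const, Finset.card_univ, Fintype.card_fin, smul_eq_mul]

theorem HasJordanType.finrank_range_pow {K V : Type*} [Field K] [AddCommGroup V] [Module K V]
    {p : ℕ} {θ : Module.End K V} {a : ℕ → ℕ} (h : HasJordanType K p θ a) (n : ℕ) :
    finrank K (range (θ ^ n)) = ∑ j ∈ Finset.Icc 1 p, a j * (j - n) := by
  obtain ⟨e, he⟩ := h
  rw [finrank_range_pow_eq_of_semiconj e he, finrank_range_stdX_pow]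

theorem jordanType_specialization_general (p : ℕ)
    (R : Type*) [CommRing R] [IsLocalRing R] [IsDomain R]
    (M : Type*) [AddCommGroup M] [Module R M] [Module.Free R M] [Module.Finite R M]
    (θ : Module.End R M) :
    (∀ i : ℕ, 1 ≤ i → i < p →
        Module.finrank (IsLocalRing.ResidueField R)
            (LinearMap.range ((θ.baseChange (IsLocalRing.ResidueField R)) ^ i))
          ≤ Module.finrank (FractionRing R)
            (LinearMap.range ((θ.baseChange (FractionRing R)) ^ i)))
      ∧ (∀ a b : ℕ → ℕ,
          HasJordanType (IsLocalRing.ResidueField R) p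
            (θ.baseChange (IsLocalRing.ResidueField R)) a →
          HasJordanType (FractionRing R) p (θ.baseChange (FractionRing R)) b →
          JordanTypeLE p a b) := by
  have hrank : ∀ i : ℕ,
      finrank (IsLocalRing.ResidueField R) (range (θ.baseChange (IsLocalRing.ResidueField R) ^ i))
        ≤ finrank (FractionRing R) (range (θ.baseChange (FractionRing R) ^ i)) := fun i => by
    rw [← baseChange_pow, ← baseChange_pow]
    exact finrank_range_baseChange_le (θ ^ i) (IsFractionRing.injective R (FractionRing R))
  refine ⟨fun i _ _ => hrank i, fun a b ha hb => jordanTypeLE_of_sum_mul_sub_le fun t => ?_⟩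
  rw [← ha.finrank_range_pow, ← hb.finrank_range_pow]
  exact hrank t

/-- Let `R` be a Noetherian local domain with residue field `K` and fraction field `L`,
and let `M` be a finite free `R`-module with an `R`-linear endomorphism `θ` satisfying
`θ^p = 0`.  Then for every `1 ≤ i < p` the rank of `(θ_K)^i` is at most the rank of
`(θ_L)^i`; consequently, the Jordan type of `M_K` is at most that of `M_L` in the
dominance order. -/
theorem jordanType_specialization (p : ℕ) (hp : 0 < p)
    (R : Type*) [CommRing R] [IsNoetherianRing R] [IsLocalRing R] [IsDomain R]
    (M : Type*) [AddCommGroup M] [Module R M] [Module.Free R M] [Module.Finite R M]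
    (θ : Module.End R M) (hθ : θ ^ p = 0) :
    (∀ i : ℕ, 1 ≤ i → i < p →
        Module.finrank (IsLocalRing.ResidueField R)
            (LinearMap.range ((θ.baseChange (IsLocalRing.ResidueField R)) ^ i))
          ≤ Module.finrank (FractionRing R)
            (LinearMap.range ((θ.baseChange (FractionRing R)) ^ i)))
      ∧ (∀ a b : ℕ → ℕ,
          HasJordanType (IsLocalRing.ResidueField R) p
            (θ.baseChange (IsLocalRing.ResidueField R)) a →
          HasJordanType (FractionRing R) p (θ.baseChange (FractionRing R)) b →
          JordanTypeLE p a b) :=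
  jordanType_specialization_general p R M θ
end

section
/- Let A be a commutative ring, let T be an m × n matrix with entries in A, let d be a natural number, and let 𝔭 be a prime ideal of A. Then the rank over κ(𝔭) of the matrix obtained from T by applying the canonical map A → κ(𝔭) entrywise is at most d if and only if the determinant of every (d+1) × (d+1) submatrix of T lies in 𝔭. Consequently, the set { 𝔭 ∈ Spec A : rank of T over κ(𝔭) ≤ d } is the Zariski-closed zero set of the ideal generated by all (d+1) × (d+1) minors of T. -/
/-!
Over a field, a matrix of rank `≥ d + 1` has `d + 1` linearly independent columns, and the
resulting `m × (d + 1)` matrix has `d + 1` linearly independent rows, which cut out an invertible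
`(d + 1) × (d + 1)` submatrix; conversely an invertible submatrix bounds the rank from below.
Applied over `κ(P)`, a minor vanishes there exactly when it lies in `P`, the kernel of
`A → κ(P)`.
-/

open Function Module Submodule Matrix

theorem exists_injective_linearIndependent_comp_of_le_finrank_span
    {K V ι : Type*} [DivisionRing K] [AddCommGroup V] [Module K V] [Finite ι]
    (v : ι → V) {k : ℕ} (hk : k ≤ finrank K (span K (Set.range v))) :
    ∃ g : Fin k → ι, Injective g ∧ LinearIndependent K (v ∘ g) := by
  obtain ⟨κ, a, ha, hspan, hli⟩ := exists_linearIndependent' K v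
  have : Finite κ := Finite.of_injective a ha
  have : Fintype κ := Fintype.ofFinite κ
  rw [← hspan, finrank_span_eq_card hli] at hk
  obtain ⟨e⟩ := Embedding.nonempty_of_card_le (α := Fin k) (β := κ) (by simpa using hk)
  exact ⟨a ∘ e, ha.comp e.injective, hli.comp e e.injective⟩

namespace Matrix

variable {K m n : Type*} [Field K] [Fintype m] [Fintype n]

theorem exists_injective_linearIndependent_rows_of_le_rank (M : Matrix m n K) {k : ℕ}
    (hk : k ≤ M.rank) :
    ∃ f : Fin k → m, Injective f ∧ LinearIndependent K (M.submatrix f id) := by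
  rw [rank_eq_finrank_span_row] at hk
  exact exists_injective_linearIndependent_comp_of_le_finrank_span M.row hk

theorem exists_det_submatrix_ne_zero_of_le_rank (M : Matrix m n K) {k : ℕ} (hk : k ≤ M.rank) :
    ∃ (f : Fin k → m) (g : Fin k → n), Injective f ∧ Injective g ∧
      (M.submatrix f g).det ≠ 0 := by
  rw [← rank_transpose] at hk
  obtain ⟨g, hg, hcols⟩ := exists_injective_linearIndependent_rows_of_le_rank Mᵀ hk
  have hrank : (M.submatrix id g).rank = k := by
    rw [← rank_transpose, transpose_submatrix]
    exact hcols.rank_matrix.trans (Fintype.card_fin k)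
  obtain ⟨f, hf, hrows⟩ :=
    exists_injective_linearIndependent_rows_of_le_rank (M.submatrix id g) hrank.ge
  refine ⟨f, g, hf, hg, ?_⟩
  rw [← isUnit_iff_ne_zero, ← isUnit_iff_isUnit_det]
  exact linearIndependent_rows_iff_isUnit.mp hrows

theorem rank_le_iff_forall_det_submatrix_eq_zero (M : Matrix m n K) (d : ℕ) :
    M.rank ≤ d ↔ ∀ (f : Fin (d + 1) → m) (g : Fin (d + 1) → n),
      Injective f → Injective g → (M.submatrix f g).det = 0 := by
  constructor
  · intro hM f g _ _
    by_contra hdet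
    have hunit : IsUnit (M.submatrix f g) :=
      (isUnit_iff_isUnit_det _).mpr (isUnit_iff_ne_zero.mpr hdet)
    have := (rank_of_isUnit _ hunit).symm.trans_le (rank_submatrix_le M f g)
    simp only [Fintype.card_fin] at this
    omega
  · intro hminors
    by_contra! hM
    obtain ⟨f, g, hf, hg, hdet⟩ := exists_det_submatrix_ne_zero_of_le_rank M hM
    exact hdet (hminors f g hf hg)

theorem rank_map_le_iff_forall_det_submatrix_mem_ker {R : Type*} [CommRing R]
    (M : Matrix m n R) (φ : R →+* K) (d : ℕ) :
    (M.map φ).rank ≤ d ↔ ∀ (f : Fin (d + 1) → m) (g : Fin (d + 1) → n),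
      Injective f → Injective g → (M.submatrix f g).det ∈ RingHom.ker φ := by
  simp only [rank_le_iff_forall_det_submatrix_eq_zero, submatrix_map, RingHom.mem_ker,
    RingHom.map_det, RingHom.mapMatrix_apply]

end Matrix

/-- The residue field `κ(P)` of a prime `P` in `Spec A`: the residue field of the
localization of `A` at `P` (canonically the field of fractions of `A/P`). -/
abbrev PrimeSpectrum.residueFieldAt {A : Type*} [CommRing A] (P : PrimeSpectrum A) :
    Type _ :=
  IsLocalRing.ResidueField (Localization.AtPrime P.asIdeal)

/-- For an `m × n` matrix `T` over a commutative ring `A`, a prime `P` of `A`, and `d : ℕ`: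
the rank of `T` over the residue field `κ(P)` is at most `d` if and only if every
`(d+1) × (d+1)` minor of `T` lies in `P`.  Consequently, the set of primes at which the
rank of `T` is at most `d` is the Zariski-closed zero set of the ideal generated by all
`(d+1) × (d+1)` minors of `T`. -/
theorem rank_le_iff_minors_mem (A : Type*) [CommRing A] (m n : ℕ)
    (T : Matrix (Fin m) (Fin n) A) (d : ℕ) :
    (∀ P : PrimeSpectrum A,
        (T.map (algebraMap A P.residueFieldAt)).rank ≤ d ↔
          ∀ (f : Fin (d + 1) → Fin m) (g : Fin (d + 1) → Fin n),
            Function.Injective f → Function.Injective g →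
              (T.submatrix f g).det ∈ P.asIdeal)
      ∧ {P : PrimeSpectrum A | (T.map (algebraMap A P.residueFieldAt)).rank ≤ d}
          = PrimeSpectrum.zeroLocus
              ((Ideal.span {x : A | ∃ (f : Fin (d + 1) → Fin m) (g : Fin (d + 1) → Fin n),
                Function.Injective f ∧ Function.Injective g ∧
                  x = (T.submatrix f g).det} : Ideal A) : Set A)
      ∧ IsClosed {P : PrimeSpectrum A |
          (T.map (algebraMap A P.residueFieldAt)).rank ≤ d} := by
  have hrank (P : PrimeSpectrum A) :
      (T.map (algebraMap A P.residueFieldAt)).rank ≤ d ↔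
        ∀ (f : Fin (d + 1) → Fin m) (g : Fin (d + 1) → Fin n),
          Injective f → Injective g → (T.submatrix f g).det ∈ P.asIdeal := by
    rw [rank_map_le_iff_forall_det_submatrix_mem_ker, Ideal.ker_algebraMap_residueField]
  refine ⟨hrank, (and_iff_left_of_imp fun h => h ▸ PrimeSpectrum.isClosed_zeroLocus _).mpr ?_⟩
  ext P
  simp only [Set.mem_ofPred, hrank, PrimeSpectrum.zeroLocus_span, PrimeSpectrum.mem_zeroLocus,
    Set.subset_def, forall_exists_index, and_imp]
  exact ⟨fun h _ f g hf hg hx => hx ▸ h f g hf hg, fun h f g hf hg => h _ f g hf hg rfl⟩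
end

section
/- Let p be a positive integer, A a Noetherian commutative ring, M a finitely generated projective A-module, and θ : M → M an A-linear endomorphism with θ^p = 0. Then for every function c : {1,...,p−1} → ℕ, the set { 𝔭 ∈ Spec A : for all 1 ≤ s < p, the rank of (θ_𝔭)^s over κ(𝔭) equals c(s) } is a locally closed subset of the prime spectrum of A with the Zariski topology (i.e. the intersection of an open set and a closed set). -/
open Module

theorem exists_linearIndependent_comp_of_le_finrank_span {K V ι : Type*} [Field K]
    [AddCommGroup V] [Module K V] [Finite ι] (v : ι → V) {k : ℕ}
    (h : k ≤ finrank K (Submodule.span K (Set.range v))) :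
    ∃ g : Fin k → ι, LinearIndependent K (v ∘ g) := by
  obtain ⟨κ, a, ha, hspan, hli⟩ := exists_linearIndependent' K v
  have : Finite κ := .of_injective a ha
  have := Fintype.ofFinite κ
  rw [← hspan, finrank_span_eq_card hli] at h
  obtain ⟨e⟩ := Function.Embedding.nonempty_of_card_le (α := Fin k) (by simpa using h)
  exact ⟨a ∘ e, hli.comp e e.injective⟩

namespace Matrix

variable {K m n : Type*} [Field K] [Fintype m] [Fintype n] {k : ℕ}

theorem le_rank_iff_exists_det_submatrix_ne_zero (N : Matrix m n K) :
    k ≤ N.rank ↔ ∃ (f : Fin k → m) (g : Fin k → n), (N.submatrix f g).det ≠ 0 := by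
  constructor
  · intro h
    rw [rank_eq_finrank_span_row] at h
    obtain ⟨f, hf⟩ := exists_linearIndependent_comp_of_le_finrank_span N.row h
    have hrank : k ≤ (N.submatrix f id).rank := by
      rw [LinearIndependent.rank_matrix (M := N.submatrix f id) hf, Fintype.card_fin]
    rw [rank_eq_finrank_span_cols] at hrank
    obtain ⟨g, hg⟩ := exists_linearIndependent_comp_of_le_finrank_span _ hrank
    exact ⟨f, g, ((isUnit_iff_isUnit_det _).1 (linearIndependent_cols_iff_isUnit.1 hg)).ne_zero⟩
  · rintro ⟨f, g, hfg⟩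
    calc k = (N.submatrix f g).rank := by
          rw [rank_of_isUnit _ ((isUnit_iff_isUnit_det _).2 hfg.isUnit), Fintype.card_fin]
      _ ≤ N.rank := rank_submatrix_le N f g

end Matrix

theorem LinearMap.finrank_range_comp_comp_of_comp_eq_id {R M N : Type*} [Semiring R]
    [AddCommMonoid M] [Module R M] [AddCommMonoid N] [Module R N]
    {π : N →ₗ[R] M} {i : M →ₗ[R] N} (h : π ∘ₗ i = LinearMap.id) (f : Module.End R M) :
    finrank R (range (i ∘ₗ f ∘ₗ π)) = finrank R (range f) := by
  have hπ : range π = ⊤ := range_eq_top.2 fun x => ⟨i x, LinearMap.congr_fun h x⟩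
  have hi : Function.Injective i := Function.LeftInverse.injective (LinearMap.congr_fun h)
  rw [range_comp, range_comp, hπ, Submodule.map_top]
  exact (Submodule.equivMapOfInjective _ hi _).finrank_eq.symm

theorem Matrix.rank_map_toMatrix'_eq_finrank_range_baseChange {A B ι : Type*} [CommSemiring A]
    [CommSemiring B] [Algebra A B] [Fintype ι] [DecidableEq ι]
    (F : (ι → A) →ₗ[A] ι → A) :
    ((LinearMap.toMatrix' F).map (algebraMap A B)).rank =
      finrank B (LinearMap.range (F.baseChange B)) := by
  let b := Algebra.TensorProduct.basis B (Pi.basisFun A ι)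
  rw [← LinearMap.toMatrix_eq_toMatrix', ← LinearMap.toMatrix_baseChange,
    rank_eq_finrank_range_toLin _ b b, toLin_toMatrix]

namespace PrimeSpectrum

variable {A : Type*} [CommRing A]

theorem algebraMap_residueFieldAt_eq_zero_iff (P : PrimeSpectrum A) {x : A} :
    algebraMap A P.residueFieldAt x = 0 ↔ x ∈ P.asIdeal := by
  rw [IsScalarTower.algebraMap_apply A (Localization.AtPrime P.asIdeal),
    IsLocalRing.ResidueField.algebraMap_eq, IsLocalRing.residue_eq_zero_iff,
    IsLocalization.AtPrime.to_map_mem_maximal_iff _ P.asIdeal]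

variable {m n : Type*} [Fintype m] [Fintype n]

theorem isOpen_setOf_le_rank_map_residueFieldAt (N : Matrix m n A) (k : ℕ) :
    IsOpen {P : PrimeSpectrum A | k ≤ (N.map (algebraMap A P.residueFieldAt)).rank} := by
  convert (isClosed_zeroLocus
    (Set.range fun fg : (Fin k → m) × (Fin k → n) => (N.submatrix fg.1 fg.2).det)).isOpen_compl
    using 1
  ext P
  simp only [Set.mem_ofPred_eq, Set.mem_compl_iff, mem_zeroLocus, Set.range_subset_iff,
    SetLike.mem_coe, Prod.forall, not_forall, Matrix.le_rank_iff_exists_det_submatrix_ne_zero]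
  refine exists₂_congr fun f g => not_congr ?_
  rw [Matrix.submatrix_map, ← RingHom.mapMatrix_apply, ← RingHom.map_det,
    algebraMap_residueFieldAt_eq_zero_iff]

theorem isLocallyClosed_setOf_forall_rank_map_residueFieldAt_eq {ι : Type*} {S : Set ι}
    (hS : S.Finite) (N : ι → Matrix m n A) (r : ι → ℕ) :
    IsLocallyClosed {P : PrimeSpectrum A |
      ∀ i ∈ S, ((N i).map (algebraMap A P.residueFieldAt)).rank = r i} := by
  have hsplit : {P : PrimeSpectrum A |
      ∀ i ∈ S, ((N i).map (algebraMap A P.residueFieldAt)).rank = r i} =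
      (⋂ i ∈ S, {P | r i ≤ ((N i).map (algebraMap A P.residueFieldAt)).rank}) ∩
        ⋂ i ∈ S, {P | r i + 1 ≤ ((N i).map (algebraMap A P.residueFieldAt)).rank}ᶜ := by
    ext P
    simp only [Set.mem_ofPred_eq, Set.mem_inter_iff, Set.mem_iInter, Set.mem_compl_iff, not_le,
      Nat.lt_succ_iff, ← forall_and, le_antisymm_iff, and_comm]
  rw [hsplit]
  have hopen := hS.isOpen_biInter fun i _ => isOpen_setOf_le_rank_map_residueFieldAt (N i) (r i)
  have hclosed := isClosed_biInter fun i (_ : i ∈ S) =>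
    (isOpen_setOf_le_rank_map_residueFieldAt (N i) (r i + 1)).isClosed_compl
  exact hopen.isLocallyClosed.inter hclosed.isLocallyClosed

end PrimeSpectrum

theorem isLocallyClosed_rank_stratum_general (p : ℕ)
    (A : Type*) [CommRing A]
    (M : Type*) [AddCommGroup M] [Module A M] [Module.Finite A M] [Module.Projective A M]
    (θ : Module.End A M) (c : ℕ → ℕ) :
    IsLocallyClosed {P : PrimeSpectrum A | ∀ s : ℕ, 1 ≤ s → s < p →
      Module.finrank P.residueFieldAt
        (LinearMap.range ((θ.baseChange P.residueFieldAt) ^ s)) = c s} := by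
  obtain ⟨n, π, hπ⟩ := Module.Finite.exists_fin' A M
  obtain ⟨i, hi⟩ := Module.projective_lifting_property π LinearMap.id hπ
  have hrank (s : ℕ) (P : PrimeSpectrum A) :
      finrank P.residueFieldAt (LinearMap.range ((θ.baseChange P.residueFieldAt) ^ s)) =
        ((LinearMap.toMatrix' (i ∘ₗ (θ ^ s) ∘ₗ π)).map
          (algebraMap A P.residueFieldAt)).rank := by
    have hsection : π.baseChange P.residueFieldAt ∘ₗ i.baseChange P.residueFieldAt =
        LinearMap.id := by
      rw [← LinearMap.baseChange_comp, hi, LinearMap.baseChange_id]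
    rw [Matrix.rank_map_toMatrix'_eq_finrank_range_baseChange, LinearMap.baseChange_comp,
      LinearMap.baseChange_comp, LinearMap.finrank_range_comp_comp_of_comp_eq_id hsection,
      LinearMap.baseChange_pow]
  simp only [hrank]
  simpa [Set.mem_Ico, and_imp] using
    PrimeSpectrum.isLocallyClosed_setOf_forall_rank_map_residueFieldAt_eq (Set.finite_Ico 1 p)
      (fun s => LinearMap.toMatrix' (i ∘ₗ (θ ^ s) ∘ₗ π)) c

/-- Let `A` be a Noetherian commutative ring, `M` a finitely generated projective
`A`-module, and `θ : M → M` an `A`-linear endomorphism with `θ^p = 0`.  Then for every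
prescribed rank function `c`, the set of primes `P` at which the rank of `(θ_P)^s` over
`κ(P)` equals `c s` for all `1 ≤ s < p` is a locally closed subset of `Spec A` with the
Zariski topology. -/
theorem isLocallyClosed_rank_stratum (p : ℕ) (hp : 0 < p)
    (A : Type*) [CommRing A] [IsNoetherianRing A]
    (M : Type*) [AddCommGroup M] [Module A M] [Module.Finite A M] [Module.Projective A M]
    (θ : Module.End A M) (hθ : θ ^ p = 0) (c : ℕ → ℕ) :
    IsLocallyClosed {P : PrimeSpectrum A | ∀ s : ℕ, 1 ≤ s → s < p →
      Module.finrank P.residueFieldAt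
        (LinearMap.range ((θ.baseChange P.residueFieldAt) ^ s)) = c s} :=
  isLocallyClosed_rank_stratum_general p A M θ c
end

section
/- Let K be a field, p a positive integer, M a finite-dimensional K[X]/(X^p)-module, N ⊆ M a submodule, and Q = M/N the quotient module. Then the short exact sequence 0 → N → M → Q → 0 splits (i.e. there is a K[X]/(X^p)-module homomorphism Q → M splitting the projection, equivalently N is a direct summand of M as a K[X]/(X^p)-module) if and only if for every s with 0 ≤ s < p, the rank of X^s on M equals the rank of X^s on N plus the rank of X^s on Q; equivalently, if and only if the Jordan type of M equals the sum of the Jordan types of N and Q. -/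
/-!
Splittings of `M → M ⧸ N` commuting with `θ` are the same as `θ`-stable complements of `N`.
Rank–nullity for `M → M ⧸ N` restricted to `range (θ ^ s)` shows that the rank of `θ ^ s` is
additive exactly when `N` is *pure* at `s`, i.e. `range (θ ^ s) ⊓ N = θ ^ s N`. A stable complement
clearly makes `N` pure. Conversely, for stable `N ≤ P` with `θ ^ p P = 0` and `N` pure in `P`,
induction on `p` gives a stable complement of `θ N` in `θ P`, say `W'`; it is disjoint from `N` by
purity at `s = 1`, and any complement of `N ⊓ V` in `V := P ⊓ θ⁻¹ W'` containing `W'` is stable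
and complementary to `N` in `P`.
-/

open Submodule LinearMap Module

theorem exists_le_disjoint_sup_eq {α : Type*} [Lattice α] [BoundedOrder α] [IsModularLattice α]
    [ComplementedLattice α] {a b v : α} (ha : a ≤ v) (hb : b ≤ v) (hab : Disjoint a b) :
    ∃ w, b ≤ w ∧ w ≤ v ∧ Disjoint a w ∧ a ⊔ w = v := by
  obtain ⟨c, hc⟩ := exists_isCompl (a ⊔ b)
  refine ⟨b ⊔ c ⊓ v, le_sup_left, sup_le hb inf_le_right, ?_, ?_⟩
  · exact hab.disjoint_sup_right_of_disjoint_sup_left (hc.disjoint.mono_right inf_le_left)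
  · rw [← sup_assoc, ← sup_inf_assoc_of_le c (sup_le ha hb), hc.sup_eq_top, top_inf_eq]

section Ring

variable {R M M₂ : Type*} [Ring R] [AddCommGroup M] [Module R M] [AddCommGroup M₂] [Module R M₂]

theorem LinearMap.isCompl_ker_range_of_comp_eq_id {f : M →ₗ[R] M₂} {g : M₂ →ₗ[R] M}
    (hfg : f ∘ₗ g = LinearMap.id) : IsCompl (ker f) (range g) := by
  have hfg' : ∀ y, f (g y) = y := LinearMap.congr_fun hfg
  constructor
  · rw [disjoint_def]
    rintro _ hx ⟨y, rfl⟩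
    rw [mem_ker, hfg'] at hx
    rw [hx, map_zero]
  · rw [codisjoint_iff, eq_top_iff]
    intro x _
    refine mem_sup.mpr ⟨x - g (f x), ?_, g (f x), mem_range_self g _, sub_add_cancel _ _⟩
    rw [mem_ker, map_sub, hfg', sub_self]

namespace Submodule

theorem sup_inf_comap_eq_of_map_le {f : M →ₗ[R] M₂} {N P : Submodule R M} {W : Submodule R M₂}
    (hNP : N ≤ P) (hP : P.map f ≤ N.map f ⊔ W) : N ⊔ P ⊓ W.comap f = P := by
  refine le_antisymm (sup_le hNP inf_le_left) fun x hx => ?_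
  obtain ⟨_, ⟨n, hn, rfl⟩, w, hw, hfx⟩ := mem_sup.mp (hP (mem_map_of_mem hx))
  refine mem_sup.mpr ⟨n, hn, x - n, ⟨sub_mem hx (hNP hn), ?_⟩, add_sub_cancel _ _⟩
  show f (x - n) ∈ W
  rwa [map_sub, ← hfx, add_sub_cancel_left]

theorem range_inf_le_map_of_isCompl {f : Module.End R M} {N W : Submodule R M} (h : IsCompl N W)
    (hN : N ≤ N.comap f) (hW : W ≤ W.comap f) : range f ⊓ N ≤ N.map f := by
  rintro _ ⟨⟨m, rfl⟩, hm⟩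
  obtain ⟨n, hn, w, hw, rfl⟩ := mem_sup.mp (h.sup_eq_top ▸ mem_top : m ∈ N ⊔ W)
  have hfw : f w ∈ N := by
    simpa only [map_add, add_sub_cancel_left] using sub_mem hm (hN hn)
  rw [map_add, disjoint_def.mp h.disjoint _ hfw (hW hw), add_zero]
  exact mem_map_of_mem hn

theorem exists_section_iff_exists_isCompl {f : Module.End R M} {N : Submodule R M}
    (hN : N ≤ N.comap f) :
    (∃ g : (M ⧸ N) →ₗ[R] M, N.mkQ ∘ₗ g = LinearMap.id ∧ f ∘ₗ g = g ∘ₗ N.mapQ N f hN) ↔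
      ∃ W : Submodule R M, IsCompl N W ∧ W ≤ W.comap f := by
  constructor
  · rintro ⟨g, hg, hfg⟩
    refine ⟨range g, by simpa using isCompl_ker_range_of_comp_eq_id hg, ?_⟩
    rintro _ ⟨y, rfl⟩
    exact ⟨N.mapQ N f hN y, (LinearMap.congr_fun hfg y).symm⟩
  · rintro ⟨W, hW, hWf⟩
    set e := quotientEquivOfIsCompl N W hW
    refine ⟨W.subtype ∘ₗ e.toLinearMap, ?_, ?_⟩
    · exact LinearMap.ext fun q => mk_quotientEquivOfIsCompl_apply hW q
    · refine LinearMap.ext fun q => ?_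
      have hfe := quotientEquivOfIsCompl_apply_mk_right hW ⟨f (e q), hWf (e q).2⟩
      calc f (e q) = e (Quotient.mk (f (e q))) := congrArg Subtype.val hfe.symm
        _ = e (N.mapQ N f hN q) := by
          conv_rhs => rw [← mk_quotientEquivOfIsCompl_apply hW q]
          rfl

end Submodule

end Ring

section DivisionRing

variable {K M M₂ : Type*} [DivisionRing K] [AddCommGroup M] [Module K M] [AddCommGroup M₂]
  [Module K M₂]

theorem Submodule.finrank_map_add_finrank_inf_ker [FiniteDimensional K M] (g : M →ₗ[K] M₂)
    (R : Submodule K M) : finrank K (R.map g) + finrank K ↥(R ⊓ ker g) = finrank K R := by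
  have := (g.domRestrict R).finrank_range_add_finrank_ker
  rwa [range_domRestrict, ker_domRestrict, ← finrank_map_subtype_eq, map_comap_subtype] at this

theorem finrank_range_eq_add_iff_range_inf_le_map [FiniteDimensional K M] {f : Module.End K M}
    {N : Submodule K M} (hN : N ≤ N.comap f) :
    finrank K (range f) = finrank K (range (f.restrict (p := N) (q := N) fun _ hx => hN hx))
      + finrank K (range (N.mapQ N f hN)) ↔ range f ⊓ N ≤ N.map f := by
  have hres : finrank K (range (f.restrict (p := N) (q := N) fun _ hx => hN hx))
      = finrank K (N.map f) := by
    rw [range_restrict]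
    exact (comapSubtypeEquivOfLe (map_le_iff_le_comap.mpr hN)).finrank_eq
  have hquot : finrank K (range (N.mapQ N f hN)) + finrank K ↥(range f ⊓ N)
      = finrank K (range f) := by
    have := (range f).finrank_map_add_finrank_inf_ker N.mkQ
    rwa [ker_mkQ, ← range_mapQ N N f hN] at this
  have hle : N.map f ≤ range f ⊓ N := le_inf map_le_range (map_le_iff_le_comap.mpr hN)
  rw [hres]
  constructor
  · intro h
    exact (eq_of_le_of_finrank_eq hle (by omega)).ge
  · intro h
    rw [← hquot, le_antisymm hle h]
    omega

theorem exists_disjoint_sup_eq_of_map_pow_inf_le (θ : Module.End K M) (p : ℕ)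
    {N P : Submodule K M} (hNP : N ≤ P) (hP : P.map θ ≤ P) (hN : N.map θ ≤ N)
    (hnil : P.map (θ ^ p) = ⊥) (hpure : ∀ s, P.map (θ ^ s) ⊓ N ≤ N.map (θ ^ s)) :
    ∃ W ≤ P, W.map θ ≤ W ∧ Disjoint N W ∧ N ⊔ W = P := by
  induction p generalizing N P with
  | zero =>
    rw [pow_zero, Module.End.one_eq_id, map_id] at hnil
    subst hnil
    exact ⟨⊥, le_rfl, by simp, disjoint_bot_right, by simpa using hNP⟩
  | succ p ih =>
    have map_pow_succ : ∀ (Q : Submodule K M) s, Q.map (θ ^ (s + 1)) = (Q.map θ).map (θ ^ s) :=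
      fun Q s => by rw [pow_succ, Module.End.mul_eq_comp, map_comp]
    obtain ⟨W', hW'P, hW', hdisj', hsup'⟩ :=
      ih (map_mono hNP) (map_mono hP) (map_mono hN) (by rwa [← map_pow_succ])
        fun s => by
          rw [← map_pow_succ, ← map_pow_succ]
          exact (inf_le_inf_left _ hN).trans (hpure (s + 1))
    set V := P ⊓ W'.comap θ
    have hW'V : W' ≤ V := le_inf (hW'P.trans hP) (map_le_iff_le_comap.mp hW')
    have hNW' : Disjoint N W' := by
      rw [disjoint_iff_inf_le]
      calc N ⊓ W' ≤ N.map θ ⊓ W' := by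
            refine le_inf ?_ inf_le_right
            simpa [inf_comm] using (inf_le_inf_right N hW'P).trans (hpure 1)
        _ ≤ ⊥ := hdisj'.le_bot
    obtain ⟨W, hW'W, hWV, hdisj, hsup⟩ :=
      exists_le_disjoint_sup_eq inf_le_right hW'V (hNW'.mono_left inf_le_left)
    have hNV : N ⊔ V = P := sup_inf_comap_eq_of_map_le hNP hsup'.ge
    refine ⟨W, hWV.trans inf_le_left, ?_, ?_, ?_⟩
    · exact ((map_mono (hWV.trans inf_le_right)).trans (map_comap_le θ W')).trans hW'W
    · rw [disjoint_iff, ← inf_eq_right.mpr hWV, ← inf_assoc]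
      exact disjoint_iff.mp hdisj
    · rw [← hNV, ← hsup, ← sup_assoc, sup_inf_self]

end DivisionRing

theorem split_iff_ranks_additive_general (K : Type*) [Field K] (p : ℕ)
    (M : Type*) [AddCommGroup M] [Module K M] [FiniteDimensional K M]
    (θ : Module.End K M) (hθ : θ ^ p = 0)
    (N : Submodule K M) (hN : N ≤ N.comap θ) :
    (∃ g : (M ⧸ N) →ₗ[K] M,
        N.mkQ ∘ₗ g = LinearMap.id ∧
        θ ∘ₗ g = g ∘ₗ Submodule.mapQ N N θ hN)
      ↔ (∀ s : ℕ, s < p →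
          Module.finrank K (LinearMap.range (θ ^ s))
            = Module.finrank K
                (LinearMap.range ((θ.restrict (p := N) (q := N) (fun x hx => hN hx)) ^ s))
              + Module.finrank K (LinearMap.range ((Submodule.mapQ N N θ hN) ^ s))) := by
  have hpow : ∀ s, N ≤ N.comap (θ ^ s) := N.le_comap_pow_of_le_comap hN
  have rank_iff : ∀ s, finrank K (range (θ ^ s))
      = finrank K (range ((θ.restrict (p := N) (q := N) fun _ hx => hN hx) ^ s))
        + finrank K (range (N.mapQ N θ hN ^ s)) ↔ range (θ ^ s) ⊓ N ≤ N.map (θ ^ s) := by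
    intro s
    rw [Module.End.pow_restrict, ← N.mapQ_pow hN s (hpow s)]
    exact finrank_range_eq_add_iff_range_inf_le_map (hpow s)
  rw [exists_section_iff_exists_isCompl]
  constructor
  · rintro ⟨W, hW, hWθ⟩ s -
    exact (rank_iff s).mpr
      (range_inf_le_map_of_isCompl hW (hpow s) (W.le_comap_pow_of_le_comap hWθ s))
  · intro h
    have hpure : ∀ s, (⊤ : Submodule K M).map (θ ^ s) ⊓ N ≤ N.map (θ ^ s) := by
      intro s
      rw [Submodule.map_top]
      rcases lt_or_ge s p with hs | hs
      · exact (rank_iff s).mp (h s hs)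
      · simp [pow_eq_zero_of_le hs hθ]
    obtain ⟨W, -, hWθ, hdisj, hsup⟩ :=
      exists_disjoint_sup_eq_of_map_pow_inf_le θ p le_top le_top (map_le_iff_le_comap.mpr hN)
        (by rw [Submodule.map_top, hθ, range_zero]) hpure
    exact ⟨W, ⟨hdisj, codisjoint_iff.mpr hsup⟩, map_le_iff_le_comap.mp hWθ⟩

/-- Let `M` be a finite-dimensional `K[X]/(X^p)`-module (a `K`-vector space with a
`p`-nilpotent endomorphism `θ`), let `N ⊆ M` be a submodule (a `θ`-stable subspace) and
`Q = M/N` the quotient module.  Then the short exact sequence `0 → N → M → Q → 0`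
splits — i.e. there is a `K[X]/(X^p)`-module homomorphism `Q → M` splitting the
projection — if and only if for every `0 ≤ s < p` the rank of `X^s` on `M` equals the
rank of `X^s` on `N` plus the rank of `X^s` on `Q` (equivalently, the Jordan type of
`M` is the sum of those of `N` and `Q`). -/
theorem split_iff_ranks_additive (K : Type*) [Field K] (p : ℕ) (hp : 0 < p)
    (M : Type*) [AddCommGroup M] [Module K M] [FiniteDimensional K M]
    (θ : Module.End K M) (hθ : θ ^ p = 0)
    (N : Submodule K M) (hN : N ≤ N.comap θ) :
    (∃ g : (M ⧸ N) →ₗ[K] M,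
        N.mkQ ∘ₗ g = LinearMap.id ∧
        θ ∘ₗ g = g ∘ₗ Submodule.mapQ N N θ hN)
      ↔ (∀ s : ℕ, s < p →
          Module.finrank K (LinearMap.range (θ ^ s))
            = Module.finrank K
                (LinearMap.range ((θ.restrict (p := N) (q := N) (fun x hx => hN hx)) ^ s))
              + Module.finrank K (LinearMap.range ((Submodule.mapQ N N θ hN) ^ s))) :=
  split_iff_ranks_additive_general K p M θ hθ N hN
end
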